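/- Let q = 5^α. In the design D = (P, T^G) where T is the image of the projective line over F₅, each point of P lies in exactly r = 5^(α-1) blocks. -/

import Mathlib

/-!
Write `i = c ∈ 𝔽₅ ⊆ F` with `c² = -1`. Since `⟨c⟩ = 𝔽₅ˣ`, the points over `𝔽₅` form the
projective line `P¹(𝔽₅)`, and `T` is exactly its image in `P`; hence the setwise stabilizer of
`T` in `SL(2,q)` is `SL(2,5)`. The stabilizer of any point is conjugate to that of `[e₀]`, the
upper triangular matrices with diagonal `(λ, λ⁻¹)`, `λ ∈ ⟨i⟩`, of order `4q`. Counting the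
`g` with `x ∈ g • T` in two ways gives `r · |SL(2,5)| = |T| · 4q`, while orbit–stabilizer on
`P¹(𝔽₅)` gives `|T| · 20 = |SL(2,5)|`; so `r = q / 5`.
-/

open Matrix MulAction Pointwise

abbrev SL2 (F : Type) [Field F] := Matrix.SpecialLinearGroup (Fin 2) F

abbrev PSL2 (F : Type) [Field F] := SL2 F ⧸ Subgroup.center (SL2 F)

/-- Nonzero vectors of `F²`. -/
def Vec (F : Type) [Field F] := {v : Fin 2 → F // v ≠ 0}

/-- Two nonzero vectors are related if they differ by multiplication by a power of `i`. -/
def vrel (F : Type) [Field F] (i : F) (v w : Vec F) : Prop :=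
  ∃ n : ℕ, (w.1 : Fin 2 → F) = i ^ n • v.1

/-- The point set `P = (F² \ {0})/⟨i⟩`. -/
def Pts (F : Type) [Field F] (i : F) := Quot (vrel F i)

/-- The class of a nonzero vector in `P`. -/
def mkPt (F : Type) [Field F] (i : F) (v : Fin 2 → F) (hv : v ≠ 0) : Pts F i :=
  Quot.mk _ ⟨v, hv⟩

lemma vec_fst_ne_zero {F : Type} [Field F] (b : F) : ![(1 : F), b] ≠ 0 := by
  intro h
  simpa using congrFun h 0

lemma vec_snd_ne_zero {F : Type} [Field F] (a : F) : ![a, (1 : F)] ≠ 0 := by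
  intro h
  simpa using congrFun h 1

/-- `SL(2,q)` acts on nonzero vectors. -/
def slVecSMul {F : Type} [Field F] (A : SL2 F) (v : Vec F) : Vec F :=
  ⟨(A : Matrix (Fin 2) (Fin 2) F) *ᵥ v.1, by
    intro h
    apply v.2
    have h2 : ((A⁻¹ : SL2 F) : Matrix (Fin 2) (Fin 2) F) *ᵥ
        ((A : Matrix (Fin 2) (Fin 2) F) *ᵥ v.1) = 0 := by rw [h, Matrix.mulVec_zero]
    rwa [Matrix.mulVec_mulVec, ← Matrix.SpecialLinearGroup.coe_mul, inv_mul_cancel,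
      Matrix.SpecialLinearGroup.coe_one, Matrix.one_mulVec] at h2⟩

instance (F : Type) [Field F] (i : F) : SMul (SL2 F) (Pts F i) :=
  ⟨fun A => Quot.map (slVecSMul A) (by
    rintro v w ⟨n, hn⟩
    exact ⟨n, by simp [slVecSMul, hn, Matrix.mulVec_smul]⟩)⟩

instance (F : Type) [Field F] (i : F) : MulAction (SL2 F) (Pts F i) where
  one_smul p := by
    induction p using Quot.ind with | _ v => ?_
    show Quot.mk _ (slVecSMul 1 v) = Quot.mk _ v
    congr 1
    exact Subtype.ext (by simp only [slVecSMul, Matrix.SpecialLinearGroup.coe_one, Matrix.one_mulVec])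
  mul_smul A B p := by
    induction p using Quot.ind with | _ v => ?_
    show Quot.mk _ (slVecSMul (A * B) v) = Quot.mk _ (slVecSMul A (slVecSMul B v))
    congr 1
    exact Subtype.ext (by simp only [slVecSMul, Matrix.SpecialLinearGroup.coe_mul, Matrix.mulVec_mulVec])

/-- The stabilizer in `PSL(2,q)` of a point of `P`, i.e. the image in the quotient
`PSL(2,q) = SL(2,q)/center` of the stabilizer in `SL(2,q)`. -/
def pslPtStab (F : Type) [Field F] (i : F) (p : Pts F i) : Subgroup (PSL2 F) :=
  (MulAction.stabilizer (SL2 F) p).map (QuotientGroup.mk' (Subgroup.center (SL2 F)))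

/-- The setwise stabilizer in `PSL(2,q)` of a set of points of `P`. -/
def pslSetStab (F : Type) [Field F] (i : F) (s : Set (Pts F i)) : Subgroup (PSL2 F) :=
  (MulAction.stabilizer (SL2 F) s).map (QuotientGroup.mk' (Subgroup.center (SL2 F)))

/-- The basic block (octahedron) `T`. -/
def basicT (F : Type) [Field F] (i : F) : Set (Pts F i) :=
  {mkPt F i ![1, 0] (vec_fst_ne_zero 0), mkPt F i ![0, 1] (vec_snd_ne_zero 0),
   mkPt F i ![1, 1] (vec_fst_ne_zero 1), mkPt F i ![1 + i, 1] (vec_snd_ne_zero (1 + i)),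
   mkPt F i ![i, 1] (vec_snd_ne_zero i), mkPt F i ![1, 1 - i] (vec_fst_ne_zero (1 - i))}

instance Nat.fact_prime_five : Fact (Nat.Prime 5) := ⟨Nat.prime_five⟩

namespace MulAction

variable {G α : Type*} [Group G] [MulAction G α]

theorem card_smul_mem_eq_card_mul_card_stabilizer {y : α} {s : Set α} (hs : s ⊆ orbit G y) :
    Nat.card {g : G // g • y ∈ s} = Nat.card s * Nat.card (stabilizer G y) := by
  choose rep hrep using fun z : s => mem_orbit_iff.mp (hs z.2)
  have hsmul (z : s) (h : stabilizer G y) : (rep z * h) • y = z := by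
    rw [mul_smul, mem_stabilizer_iff.mp h.2, hrep]
  rw [← Nat.card_prod]
  refine Nat.card_congr
    { toFun := fun g => (⟨g.1 • y, g.2⟩, ⟨(rep ⟨_, g.2⟩)⁻¹ * g.1, by
        rw [mem_stabilizer_iff, mul_smul, inv_smul_eq_iff, hrep]⟩)
      invFun := fun p => ⟨rep p.1 * p.2, (hsmul p.1 p.2).symm ▸ p.1.2⟩
      left_inv := fun g => Subtype.ext (mul_inv_cancel_left _ _)
      right_inv := fun p => ?_ }
  obtain ⟨z, h⟩ := p
  have hz : (⟨(rep z * h) • y, (hsmul z h).symm ▸ z.2⟩ : s) = z := Subtype.ext (hsmul z h)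
  ext
  · exact hsmul z h
  · simp only [hz, inv_mul_cancel_left]

/-- Both sides count `{g | g • x ∈ B}`, through `g ↦ g⁻¹ • B` and `g ↦ g • x` respectively. -/
theorem card_blocks_through_mul_card_stabilizer [IsPretransitive G α] (B : Set α) (x : α) :
    Nat.card {β : Set α | β ∈ orbit G B ∧ x ∈ β} * Nat.card (stabilizer G B) =
      Nat.card B * Nat.card (stabilizer G x) := by
  rw [← card_smul_mem_eq_card_mul_card_stabilizer fun β hβ => hβ.1,
    ← card_smul_mem_eq_card_mul_card_stabilizer fun z _ => exists_smul_eq G x z]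
  refine Nat.card_congr ((Equiv.inv G).subtypeEquiv fun g => ?_)
  simp [mem_orbit, Set.mem_smul_set_iff_inv_smul_mem]

end MulAction

theorem Nat.card_submonoidPowers_of_ne_zero {G₀ : Type*} [GroupWithZero G₀] {a : G₀}
    (ha : a ≠ 0) : Nat.card (Submonoid.powers a) = orderOf a := by
  rw [← Units.val_mk0 ha, orderOf_units, ← Nat.card_submonoidPowers, ← Units.coeHom_apply,
    ← Submonoid.map_powers]
  exact Nat.card_image_of_injective Units.val_injective _

theorem pow_three_mul_mul_pow_eq_one {R : Type*} [Ring R] {i : R} (hi : i ^ 2 = -1) (n : ℕ) :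
    i ^ (3 * n) * i ^ n = 1 := by
  rw [← pow_add, show 3 * n + n = 2 * (2 * n) by ring, pow_mul, hi]
  simp [pow_mul]

namespace Matrix.SpecialLinearGroup

theorem mem_range_map_of_forall_mem_range {n R S : Type*} [Fintype n] [DecidableEq n]
    [CommRing R] [CommRing S] {f : R →+* S} (hf : Function.Injective f)
    {A : SpecialLinearGroup n S} (h : ∀ a b, A a b ∈ Set.range f) : A ∈ (map f).range := by
  choose g hg using h
  have hA : f.mapMatrix (Matrix.of g) = A := Matrix.ext hg
  refine ⟨⟨Matrix.of g, hf ?_⟩, Subtype.ext hA⟩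
  rw [RingHom.map_det, hA, A.2, map_one]

variable {K : Type} [Field K]

theorem mulVec_ne_zero (A : SL2 K) {v : Fin 2 → K} (hv : v ≠ 0) :
    (A : Matrix (Fin 2) (Fin 2) K) *ᵥ v ≠ 0 :=
  fun h => hv (Matrix.eq_zero_of_mulVec_eq_zero (by simp) h)

theorem exists_mulVec_single_eq {v : Fin 2 → K} (hv : v ≠ 0) :
    ∃ A : SL2 K, (A : Matrix (Fin 2) (Fin 2) K) *ᵥ Pi.single 0 1 = v := by
  by_cases h0 : v 0 = 0
  · have h1 : v 1 ≠ 0 := fun h1 => hv (funext fun j => by fin_cases j <;> simp [h0, h1])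
    refine ⟨⟨!![0, -(v 1)⁻¹; v 1, 0], by simp [Matrix.det_fin_two, h1]⟩, ?_⟩
    ext j; fin_cases j <;> simp [h0]
  · refine ⟨⟨!![v 0, 0; v 1, (v 0)⁻¹], by simp [Matrix.det_fin_two, h0]⟩, ?_⟩
    ext j; fin_cases j <;> simp

end Matrix.SpecialLinearGroup

namespace Pts

section Field

variable {K : Type} [Field K] {i : K}

@[elab_as_elim]
theorem ind {motive : Pts K i → Prop} (h : ∀ v hv, motive (mkPt K i v hv)) (x : Pts K i) :
    motive x :=
  Quot.ind (fun v => h v.1 v.2) x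

theorem vrel_equivalence (hi : i ^ 2 = -1) : Equivalence (vrel K i) where
  refl _ := ⟨0, by simp⟩
  symm := by
    rintro v w ⟨n, h⟩
    exact ⟨3 * n, by rw [h, smul_smul, pow_three_mul_mul_pow_eq_one hi, one_smul]⟩
  trans := by
    rintro u v w ⟨n, hn⟩ ⟨m, hm⟩
    exact ⟨m + n, by rw [hm, hn, smul_smul, ← pow_add]⟩

theorem mkPt_eq_mkPt_iff (hi : i ^ 2 = -1) {v w : Fin 2 → K} (hv : v ≠ 0) (hw : w ≠ 0) :
    mkPt K i v hv = mkPt K i w hw ↔ ∃ n : ℕ, w = i ^ n • v :=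
  Quot.eq.trans (vrel_equivalence hi).eqvGen_iff

theorem mkPt_congr {v w : Fin 2 → K} (h : v = w) (hv : v ≠ 0) (hw : w ≠ 0) :
    mkPt K i v hv = mkPt K i w hw := by
  subst h; rfl

theorem smul_mkPt (A : SL2 K) (v : Fin 2 → K) (hv : v ≠ 0) :
    A • mkPt K i v hv = mkPt K i (A *ᵥ v) (A.mulVec_ne_zero hv) :=
  rfl

instance : IsPretransitive (SL2 K) (Pts K i) := by
  rw [isPretransitive_iff_base (mkPt K i (Pi.single 0 1) (by simp))]
  refine Pts.ind fun v hv => ?_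
  obtain ⟨A, hA⟩ := SpecialLinearGroup.exists_mulVec_single_eq hv
  exact ⟨A, mkPt_congr hA _ _⟩

theorem mem_stabilizer_single_iff (hi : i ^ 2 = -1) (h : (Pi.single 0 1 : Fin 2 → K) ≠ 0)
    (A : SL2 K) :
    A ∈ stabilizer (SL2 K) (mkPt K i (Pi.single 0 1) h) ↔
      A 1 0 = 0 ∧ A 0 0 ∈ Submonoid.powers i := by
  have hi0 : i ≠ 0 := by rintro rfl; simp at hi
  rw [mem_stabilizer_iff, smul_mkPt, mkPt_eq_mkPt_iff hi]
  constructor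
  · rintro ⟨n, hn⟩
    have h0 : 1 = i ^ n * A.1 0 0 := by simpa using congrFun hn 0
    have h1 : A.1 1 0 = 0 := by simpa [hi0] using congrFun hn 1
    refine ⟨h1, 3 * n, show i ^ (3 * n) = _ from ?_⟩
    linear_combination i ^ (3 * n) * h0 + A.1 0 0 * pow_three_mul_mul_pow_eq_one hi n
  · rintro ⟨h10, m, hm⟩
    refine ⟨3 * m, ?_⟩
    ext j; fin_cases j <;> simp [h10, ← hm, pow_three_mul_mul_pow_eq_one hi]

theorem card_stabilizer_single (hi : i ^ 2 = -1) (h : (Pi.single 0 1 : Fin 2 → K) ≠ 0) :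
    Nat.card (stabilizer (SL2 K) (mkPt K i (Pi.single 0 1) h)) = orderOf i * Nat.card K := by
  have hi0 : i ≠ 0 := by rintro rfl; simp at hi
  have hpow0 {a : K} (ha : a ∈ Submonoid.powers i) : a ≠ 0 := by
    obtain ⟨n, rfl⟩ := ha; exact pow_ne_zero n hi0
  rw [← Nat.card_submonoidPowers_of_ne_zero hi0, ← Nat.card_prod]
  refine Nat.card_congr
    { toFun := fun A => (⟨A.1 0 0, ((mem_stabilizer_single_iff hi h A).mp A.2).2⟩, A.1 0 1)
      invFun := fun p => ⟨⟨!![p.1.1, p.2; 0, p.1.1⁻¹], by simp [Matrix.det_fin_two, hpow0 p.1.2]⟩,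
        (mem_stabilizer_single_iff hi h _).mpr ⟨rfl, p.1.2⟩⟩
      left_inv := fun A => ?_
      right_inv := fun p => rfl }
  obtain ⟨h10, h00⟩ := (mem_stabilizer_single_iff hi h A).mp A.2
  have hdet : A.1.1 0 0 * A.1.1 1 1 = 1 := by
    simpa only [Matrix.det_fin_two, h10, mul_zero, sub_zero] using A.1.2
  ext j k
  fin_cases j <;> fin_cases k <;> simp [h10, eq_inv_of_mul_eq_one_right hdet]

theorem card_stabilizer (hi : i ^ 2 = -1) (x : Pts K i) :
    Nat.card (stabilizer (SL2 K) x) = orderOf i * Nat.card K := by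
  obtain ⟨g, rfl⟩ := exists_smul_eq (SL2 K) (mkPt K i (Pi.single 0 1) (by simp)) x
  rw [← Nat.card_congr (stabilizerEquivStabilizer rfl).toEquiv, card_stabilizer_single hi]

theorem orderOf_mul_card_mul_card_eq_card_SL2 (hi : i ^ 2 = -1) :
    orderOf i * Nat.card K * Nat.card (Pts K i) = Nat.card (SL2 K) := by
  have x : Pts K i := mkPt K i (Pi.single 0 1) (by simp)
  rw [← card_stabilizer hi x, ← index_stabilizer_of_transitive (SL2 K) x, Subgroup.card_mul_index]

end Field

section Embedding

variable {k K : Type} [Field k] [Field K] (f : k →+* K) {c : k}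

theorem comp_ne_zero {v : Fin 2 → k} (hv : v ≠ 0) : f ∘ v ≠ 0 :=
  fun h => hv (funext fun j => f.injective (by simpa using congrFun h j))

def map (f : k →+* K) (c : k) : Pts k c → Pts K (f c) :=
  Quot.map (fun v => ⟨f ∘ v.1, comp_ne_zero f v.2⟩) fun _ _ ⟨n, h⟩ => ⟨n, by ext j; simp [h]⟩

theorem map_mkPt {v : Fin 2 → k} (hv : v ≠ 0) :
    map f c (mkPt k c v hv) = mkPt K (f c) (f ∘ v) (comp_ne_zero f hv) :=
  rfl

variable {f}

theorem map_sq_eq_neg_one (hc : c ^ 2 = -1) : f c ^ 2 = -1 := by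
  rw [← map_pow, hc, map_neg, map_one]

theorem map_injective (hc : c ^ 2 = -1) : Function.Injective (map f c) := by
  intro x y
  induction x using Pts.ind with | h v hv => ?_
  induction y using Pts.ind with | h w hw => ?_
  rw [map_mkPt, map_mkPt, mkPt_eq_mkPt_iff (map_sq_eq_neg_one hc), mkPt_eq_mkPt_iff hc]
  rintro ⟨n, h⟩
  exact ⟨n, f.injective.comp_left (by ext j; simpa using congrFun h j)⟩

theorem map_smul (B : SL2 k) (x : Pts k c) :
    map f c (B • x) = SpecialLinearGroup.map f B • map f c x := by
  induction x using Pts.ind with | h v hv => ?_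
  exact mkPt_congr (funext fun j => RingHom.map_mulVec f _ v j) _ _

theorem map_smul_range (B : SL2 k) :
    SpecialLinearGroup.map f B • Set.range (map f c) = Set.range (map f c) := by
  rw [Set.smul_set_range]
  simp_rw [← map_smul]
  exact (MulAction.surjective B).range_comp _

/-- A matrix stabilizing the image of `P(k)` maps each `eⱼ` to a multiple of a `k`-rational
vector by a power of `f c`, which is itself `k`-rational: so all its entries lie in `k`. -/
theorem stabilizer_range_map (hc : c ^ 2 = -1) :
    stabilizer (SL2 K) (Set.range (map f c)) = (SpecialLinearGroup.map f).range := by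
  ext A
  refine ⟨fun hA => ?_, by rintro ⟨B, rfl⟩; exact map_smul_range B⟩
  have hcol (j : Fin 2) : ∃ u : Fin 2 → k, A *ᵥ Pi.single j 1 = f ∘ u := by
    have hj : mkPt K (f c) (Pi.single j 1) (by simp) =
        map f c (mkPt k c (Pi.single j 1) (by simp)) :=
      mkPt_congr (by ext l; by_cases l = j <;> simp_all) _ _
    have : A • mkPt K (f c) (Pi.single j 1) (by simp) ∈ Set.range (map f c) := by
      rw [← mem_stabilizer_iff.mp hA, hj]
      exact Set.smul_mem_smul_set (Set.mem_range_self _)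
    obtain ⟨y, hy⟩ := this
    induction y using Pts.ind with | h v hv => ?_
    obtain ⟨n, hn⟩ := (mkPt_eq_mkPt_iff (map_sq_eq_neg_one hc) _ _).mp hy
    exact ⟨c ^ n • v, by rw [hn]; ext; simp⟩
  refine SpecialLinearGroup.mem_range_map_of_forall_mem_range f.injective fun a b => ?_
  obtain ⟨u, hu⟩ := hcol b
  exact ⟨u a, by simpa using (congrFun hu a).symm⟩

theorem card_stabilizer_range_map (hc : c ^ 2 = -1) :
    Nat.card (stabilizer (SL2 K) (Set.range (map f c))) = Nat.card (SL2 k) := by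
  rw [stabilizer_range_map hc]
  refine Nat.card_congr (MonoidHom.ofInjective fun A B h => ?_).toEquiv.symm
  ext a b
  exact f.injective (congrArg (fun M : SL2 K => M a b) h)

theorem image_map_basicT : map f c '' basicT k c = basicT K (f c) := by
  simp only [basicT, Set.image_insert_eq, Set.image_singleton, map_mkPt]
  congr! <;> ext j <;> fin_cases j <;> simp

end Embedding

theorem basicT_zmod_five_eq_univ {c : ZMod 5} (hc : c ^ 2 = -1) :
    basicT (ZMod 5) c = Set.univ := by
  have key : ∀ c : ZMod 5, c ^ 2 = -1 → ∀ w : Fin 2 → ZMod 5, w ≠ 0 → ∃ n : Fin 4,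
      ![1, 0] = c ^ (n : ℕ) • w ∨ ![0, 1] = c ^ (n : ℕ) • w ∨ ![1, 1] = c ^ (n : ℕ) • w ∨
      ![1 + c, 1] = c ^ (n : ℕ) • w ∨ ![c, 1] = c ^ (n : ℕ) • w ∨
      ![1, 1 - c] = c ^ (n : ℕ) • w := by
    decide
  refine Set.eq_univ_of_forall (Pts.ind fun w hw => ?_)
  obtain ⟨n, h⟩ := key c hc w hw
  simp only [basicT, Set.mem_insert_iff, Set.mem_singleton_iff, mkPt_eq_mkPt_iff hc, ← exists_or]
  exact ⟨n, h⟩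

end Pts

theorem exists_zmod_five_castHom_eq {K : Type} [Field K] [CharP K 5] {i : K} (hi : i ^ 2 = -1) :
    ∃ c : ZMod 5, c ^ 2 = -1 ∧ ZMod.castHom dvd_rfl K c = i := by
  have h5 : (5 : K) = 0 := by exact_mod_cast CharP.cast_eq_zero K 5
  rcases mul_eq_zero.mp (by linear_combination hi - h5 : (i - 2) * (i + 2) = 0) with h | h
  · exact ⟨2, by decide, by simp only [map_ofNat]; linear_combination -h⟩
  · exact ⟨-2, by decide, by simp only [map_neg, map_ofNat]; linear_combination -h⟩

theorem stmt_14_general (α : ℕ) (F : Type) [Field F] [Fintype F]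
    (hcard : Fintype.card F = 5 ^ α) (i : F) (hi : i ^ 2 = -1) :
    ∀ x : Pts F i,
      Nat.card {β : Set (Pts F i) | β ∈ MulAction.orbit (SL2 F) (basicT F i) ∧ x ∈ β} =
        5 ^ (α - 1) := by
  have : CharP F 5 := charP_of_card_eq_prime_pow hcard
  obtain ⟨c, hc, rfl⟩ := exists_zmod_five_castHom_eq hi
  set f := ZMod.castHom (dvd_refl 5) F
  intro x
  set N := Nat.card {β : Set (Pts F (f c)) | β ∈ orbit (SL2 F) (basicT F (f c)) ∧ x ∈ β}
  have hT : basicT F (f c) = Set.range (Pts.map f c) := by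
    rw [← Pts.image_map_basicT, Pts.basicT_zmod_five_eq_univ hc, Set.image_univ]
  have hord : orderOf (f c) = orderOf c := orderOf_injective f.toMonoidHom f.injective c
  have hSL := Pts.orderOf_mul_card_mul_card_eq_card_SL2 hc
  have hblocks := card_blocks_through_mul_card_stabilizer (G := SL2 F) (basicT F (f c)) x
  rw [Pts.card_stabilizer hi x, hT, Pts.card_stabilizer_range_map hc,
    Nat.card_range_of_injective (Pts.map_injective hc), ← hSL, hord,
    Nat.card_eq_fintype_card (α := F), hcard, Nat.card_zmod, ← hT] at hblocks
  have hpos : 0 < orderOf c * Nat.card (Pts (ZMod 5) c) := by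
    refine Nat.pos_of_ne_zero fun h0 => (Nat.card_pos (α := SL2 (ZMod 5))).ne' ?_
    rw [← hSL, mul_right_comm, h0, zero_mul]
  have hN : N * 5 = 5 ^ α := Nat.eq_of_mul_eq_mul_right hpos (by linear_combination hblocks)
  cases α with
  | zero => omega
  | succ a => simpa [pow_succ] using hN

/-- For `q = 5^α`, in the design `D = (P, T^G)` each point of `P` lies in exactly
`r = 5^(α-1)` blocks. -/
theorem stmt_14 (α : ℕ) (hα : 1 ≤ α) (F : Type) [Field F] [Fintype F]
    (hcard : Fintype.card F = 5 ^ α) (i : F) (hi : i ^ 2 = -1) :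
    ∀ x : Pts F i,
      Nat.card {β : Set (Pts F i) | β ∈ MulAction.orbit (SL2 F) (basicT F i) ∧ x ∈ β} =
        5 ^ (α - 1) :=
  stmt_14_general α F hcard i hi
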